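/- The span of the ten contact vector fields X_H for H ∈ {1, x, x^2, y, z, xz, x^2z - 2xy, z^2, 2yz - xz^2, 4xyz - 4y^2 - x^2z^2} is closed under the Lie bracket, i.e. it forms a ten-dimensional real Lie algebra. -/

import Mathlib

noncomputable section

def px (f : ℝ × ℝ × ℝ → ℝ) (p : ℝ × ℝ × ℝ) : ℝ := fderiv ℝ f p (1, 0, 0)
def py (f : ℝ × ℝ × ℝ → ℝ) (p : ℝ × ℝ × ℝ) : ℝ := fderiv ℝ f p (0, 1, 0)
def pz (f : ℝ × ℝ × ℝ → ℝ) (p : ℝ × ℝ × ℝ) : ℝ := fderiv ℝ f p (0, 0, 1)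

/-- The contact vector field associated with a Hamiltonian H(x,y,z). -/
def XH (H : ℝ × ℝ × ℝ → ℝ) (p : ℝ × ℝ × ℝ) : ℝ × ℝ × ℝ :=
  (-(pz H p), H p - p.2.2 * pz H p, px H p + p.2.2 * py H p)

/-- The commutator of vector fields on ℝ³. -/
def vbracket (X Y : ℝ × ℝ × ℝ → ℝ × ℝ × ℝ) (p : ℝ × ℝ × ℝ) : ℝ × ℝ × ℝ :=
  fderiv ℝ Y p (X p) - fderiv ℝ X p (Y p)

/-- The ten generating Hamiltonians. -/
def gens : Set (ℝ × ℝ × ℝ → ℝ × ℝ × ℝ) :=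
  {XH fun _ => 1,
   XH fun p => p.1,
   XH fun p => p.1 ^ 2,
   XH fun p => p.2.1,
   XH fun p => p.2.2,
   XH fun p => p.1 * p.2.2,
   XH fun p => p.1 ^ 2 * p.2.2 - 2 * p.1 * p.2.1,
   XH fun p => p.2.2 ^ 2,
   XH fun p => 2 * p.2.1 * p.2.2 - p.1 * p.2.2 ^ 2,
   XH fun p => 4 * p.1 * p.2.1 * p.2.2 - 4 * p.2.1 ^ 2 - p.1 ^ 2 * p.2.2 ^ 2}


abbrev EE : Type := ℝ × ℝ × ℝ

open ContinuousLinearMap in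
lemma hXc (p : EE) : HasFDerivAt (fun q : EE => q.1) (fst ℝ ℝ (ℝ × ℝ)) p := hasFDerivAt_fst
open ContinuousLinearMap in
lemma hYc (p : EE) : HasFDerivAt (fun q : EE => q.2.1) ((fst ℝ ℝ ℝ).comp (snd ℝ ℝ (ℝ × ℝ))) p :=
  hasFDerivAt_fst.comp p hasFDerivAt_snd
open ContinuousLinearMap in
lemma hZc (p : EE) : HasFDerivAt (fun q : EE => q.2.2) ((snd ℝ ℝ ℝ).comp (snd ℝ ℝ (ℝ × ℝ))) p :=
  hasFDerivAt_snd.comp p hasFDerivAt_snd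

lemma fd_eval {f : EE → EE} {L : EE →L[ℝ] EE} {p : EE} (h : HasFDerivAt f L p) (v : EE) :
    fderiv ℝ f p v = L v := by rw [h.fderiv]

def V1 : EE → EE := fun q => ((0:ℝ), (1:ℝ), (0:ℝ))

def V2 : EE → EE := fun q => ((0:ℝ), q.1, (1:ℝ))

def V3 : EE → EE := fun q => ((0:ℝ), (q.1 * q.1), (2 * q.1))

def V4 : EE → EE := fun q => ((0:ℝ), q.2.1, q.2.2)

def V5 : EE → EE := fun q => ((-1:ℝ), (0:ℝ), (0:ℝ))

def V6 : EE → EE := fun q => ((-q.1), (0:ℝ), q.2.2)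

def V7 : EE → EE := fun q => ((-(q.1 * q.1)), (-(2 * (q.1 * q.2.1))), (-(2 * q.2.1)))

def V8 : EE → EE := fun q => ((-(2 * q.2.2)), (-(q.2.2 * q.2.2)), (0:ℝ))

def V9 : EE → EE := fun q => (((2 * (q.1 * q.2.2)) - (2 * q.2.1)), (q.1 * (q.2.2 * q.2.2)), (q.2.2 * q.2.2))

def V10 : EE → EE := fun q => (((2 * ((q.1 * q.1) * q.2.2)) - (4 * (q.1 * q.2.1))), (((q.1 * q.1) * (q.2.2 * q.2.2)) - (4 * (q.2.1 * q.2.1))), ((2 * (q.1 * (q.2.2 * q.2.2))) - (4 * (q.2.1 * q.2.2))))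

lemma eX1 : (XH (fun _ => 1)) = V1 := by
  funext p
  have h := (hasFDerivAt_const (𝕜 := ℝ) (1:ℝ) p)
  simp only [XH, px, py, pz, pow_two, h.fderiv, V1]
  simp
  all_goals try constructor
  all_goals try constructor
  all_goals ring

lemma eX2 : (XH (fun p => p.1)) = V2 := by
  funext p
  have h := (hXc p)
  simp only [XH, px, py, pz, pow_two, h.fderiv, V2]
  simp
  all_goals try constructor
  all_goals try constructor
  all_goals ring

lemma eX3 : (XH (fun p => p.1 ^ 2)) = V3 := by
  funext p
  have h := ((hXc p).mul (hXc p))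
  simp only [Pi.mul_def, Pi.sub_def] at h
  simp only [XH, px, py, pz, pow_two, h.fderiv, V3]
  simp
  all_goals try constructor
  all_goals try constructor
  all_goals ring

lemma eX4 : (XH (fun p => p.2.1)) = V4 := by
  funext p
  have h := (hYc p)
  simp only [XH, px, py, pz, pow_two, h.fderiv, V4]
  simp
  all_goals try constructor
  all_goals try constructor
  all_goals ring

lemma eX5 : (XH (fun p => p.2.2)) = V5 := by
  funext p
  have h := (hZc p)
  simp only [XH, px, py, pz, pow_two, h.fderiv, V5]
  simp
  all_goals try constructor
  all_goals try constructor
  all_goals ring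

lemma eX6 : (XH (fun p => p.1 * p.2.2)) = V6 := by
  funext p
  have h := ((hXc p).mul (hZc p))
  simp only [Pi.mul_def, Pi.sub_def] at h
  simp only [XH, px, py, pz, pow_two, h.fderiv, V6]
  simp
  all_goals try constructor
  all_goals try constructor
  all_goals ring

lemma eX7 : (XH (fun p => p.1 ^ 2 * p.2.2 - 2 * p.1 * p.2.1)) = V7 := by
  funext p
  have h := ((((hXc p).mul (hXc p)).mul (hZc p)).sub (((hXc p).const_mul 2).mul (hYc p)))
  simp only [Pi.mul_def, Pi.sub_def] at h
  simp only [XH, px, py, pz, pow_two, h.fderiv, V7]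
  simp
  all_goals try constructor
  all_goals try constructor
  all_goals ring

lemma eX8 : (XH (fun p => p.2.2 ^ 2)) = V8 := by
  funext p
  have h := ((hZc p).mul (hZc p))
  simp only [Pi.mul_def, Pi.sub_def] at h
  simp only [XH, px, py, pz, pow_two, h.fderiv, V8]
  simp
  all_goals try constructor
  all_goals try constructor
  all_goals ring

lemma eX9 : (XH (fun p => 2 * p.2.1 * p.2.2 - p.1 * p.2.2 ^ 2)) = V9 := by
  funext p
  have h := ((((hYc p).const_mul 2).mul (hZc p)).sub ((hXc p).mul ((hZc p).mul (hZc p))))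
  simp only [Pi.mul_def, Pi.sub_def] at h
  simp only [XH, px, py, pz, pow_two, h.fderiv, V9]
  simp
  all_goals try constructor
  all_goals try constructor
  all_goals ring

lemma eX10 : (XH (fun p => 4 * p.1 * p.2.1 * p.2.2 - 4 * p.2.1 ^ 2 - p.1 ^ 2 * p.2.2 ^ 2)) = V10 := by
  funext p
  have h := ((((((hXc p).const_mul 4).mul (hYc p)).mul (hZc p)).sub (((hYc p).mul (hYc p)).const_mul 4)).sub (((hXc p).mul (hXc p)).mul ((hZc p).mul (hZc p))))
  simp only [Pi.mul_def, Pi.sub_def] at h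
  simp only [XH, px, py, pz, pow_two, h.fderiv, V10]
  simp
  all_goals try constructor
  all_goals try constructor
  all_goals ring

lemma dV1 (p w : EE) : fderiv ℝ V1 p w = (0, 0, 0) := by
  have h := HasFDerivAt.prodMk (hasFDerivAt_const (𝕜 := ℝ) (0:ℝ) p) (HasFDerivAt.prodMk (hasFDerivAt_const (𝕜 := ℝ) (1:ℝ) p) (hasFDerivAt_const (𝕜 := ℝ) (0:ℝ) p))
  unfold V1
  rw [fd_eval h]
  simp
  all_goals try constructor
  all_goals try constructor
  all_goals ring

lemma dV2 (p w : EE) : fderiv ℝ V2 p w = (0, w.1, 0) := by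
  have h := HasFDerivAt.prodMk (hasFDerivAt_const (𝕜 := ℝ) (0:ℝ) p) (HasFDerivAt.prodMk (hXc p) (hasFDerivAt_const (𝕜 := ℝ) (1:ℝ) p))
  unfold V2
  rw [fd_eval h]
  simp
  all_goals try constructor
  all_goals try constructor
  all_goals ring

lemma dV3 (p w : EE) : fderiv ℝ V3 p w = (0, 2 * p.1 * w.1, 2 * w.1) := by
  have h := HasFDerivAt.prodMk (hasFDerivAt_const (𝕜 := ℝ) (0:ℝ) p) (HasFDerivAt.prodMk ((hXc p).mul (hXc p)) ((hXc p).const_mul 2))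
  simp only [Pi.mul_apply, Pi.sub_apply, Pi.neg_apply] at h
  unfold V3
  rw [fd_eval h]
  simp
  all_goals try constructor
  all_goals try constructor
  all_goals ring

lemma dV4 (p w : EE) : fderiv ℝ V4 p w = (0, w.2.1, w.2.2) := by
  have h := HasFDerivAt.prodMk (hasFDerivAt_const (𝕜 := ℝ) (0:ℝ) p) (HasFDerivAt.prodMk (hYc p) (hZc p))
  unfold V4
  rw [fd_eval h]
  simp
  all_goals try constructor
  all_goals try constructor
  all_goals ring

lemma dV5 (p w : EE) : fderiv ℝ V5 p w = (0, 0, 0) := by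
  have h := HasFDerivAt.prodMk (hasFDerivAt_const (𝕜 := ℝ) (-1:ℝ) p) (HasFDerivAt.prodMk (hasFDerivAt_const (𝕜 := ℝ) (0:ℝ) p) (hasFDerivAt_const (𝕜 := ℝ) (0:ℝ) p))
  unfold V5
  rw [fd_eval h]
  simp
  all_goals try constructor
  all_goals try constructor
  all_goals ring

lemma dV6 (p w : EE) : fderiv ℝ V6 p w = (-w.1, 0, w.2.2) := by
  have h := HasFDerivAt.prodMk ((hXc p).neg) (HasFDerivAt.prodMk (hasFDerivAt_const (𝕜 := ℝ) (0:ℝ) p) (hZc p))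
  simp only [Pi.mul_apply, Pi.sub_apply, Pi.neg_apply] at h
  unfold V6
  rw [fd_eval h]
  simp
  all_goals try constructor
  all_goals try constructor
  all_goals ring

lemma dV7 (p w : EE) : fderiv ℝ V7 p w = ((-2) * p.1 * w.1, ((-2) * p.2.1 * w.1) + ((-2) * p.1 * w.2.1), (-2) * w.2.1) := by
  have h := HasFDerivAt.prodMk (((hXc p).mul (hXc p)).neg) (HasFDerivAt.prodMk ((((hXc p).mul (hYc p)).const_mul 2).neg) (((hYc p).const_mul 2).neg))
  simp only [Pi.mul_apply, Pi.sub_apply, Pi.neg_apply] at h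
  unfold V7
  rw [fd_eval h]
  simp
  all_goals try constructor
  all_goals try constructor
  all_goals ring

lemma dV8 (p w : EE) : fderiv ℝ V8 p w = ((-2) * w.2.2, (-2) * p.2.2 * w.2.2, 0) := by
  have h := HasFDerivAt.prodMk (((hZc p).const_mul 2).neg) (HasFDerivAt.prodMk (((hZc p).mul (hZc p)).neg) (hasFDerivAt_const (𝕜 := ℝ) (0:ℝ) p))
  simp only [Pi.mul_apply, Pi.sub_apply, Pi.neg_apply] at h
  unfold V8
  rw [fd_eval h]
  simp
  all_goals try constructor
  all_goals try constructor
  all_goals ring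

lemma dV9 (p w : EE) : fderiv ℝ V9 p w = ((2 * p.2.2 * w.1) + ((-2) * w.2.1) + (2 * p.1 * w.2.2), (p.2.2 * p.2.2 * w.1) + (2 * p.1 * p.2.2 * w.2.2), 2 * p.2.2 * w.2.2) := by
  have h := HasFDerivAt.prodMk ((((hXc p).mul (hZc p)).const_mul 2).sub ((hYc p).const_mul 2)) (HasFDerivAt.prodMk ((hXc p).mul ((hZc p).mul (hZc p))) ((hZc p).mul (hZc p)))
  simp only [Pi.mul_apply, Pi.sub_apply, Pi.neg_apply] at h
  unfold V9
  rw [fd_eval h]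
  simp
  all_goals try constructor
  all_goals try constructor
  all_goals ring

lemma dV10 (p w : EE) : fderiv ℝ V10 p w = (((-4) * p.2.1 * w.1 + 4 * p.1 * p.2.2 * w.1) + ((-4) * p.1 * w.2.1) + (2 * p.1 * p.1 * w.2.2), (2 * p.1 * p.2.2 * p.2.2 * w.1) + ((-8) * p.2.1 * w.2.1) + (2 * p.1 * p.1 * p.2.2 * w.2.2), (2 * p.2.2 * p.2.2 * w.1) + ((-4) * p.2.2 * w.2.1) + ((-4) * p.2.1 * w.2.2 + 4 * p.1 * p.2.2 * w.2.2)) := by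
  have h := HasFDerivAt.prodMk (((((hXc p).mul (hXc p)).mul (hZc p)).const_mul 2).sub (((hXc p).mul (hYc p)).const_mul 4)) (HasFDerivAt.prodMk ((((hXc p).mul (hXc p)).mul ((hZc p).mul (hZc p))).sub (((hYc p).mul (hYc p)).const_mul 4)) ((((hXc p).mul ((hZc p).mul (hZc p))).const_mul 2).sub (((hYc p).mul (hZc p)).const_mul 4)))
  simp only [Pi.mul_apply, Pi.sub_apply, Pi.neg_apply] at h
  unfold V10
  rw [fd_eval h]
  simp
  all_goals try constructor
  all_goals try constructor
  all_goals ring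

lemma diffV1 : Differentiable ℝ V1 := fun p => (HasFDerivAt.prodMk (hasFDerivAt_const (𝕜 := ℝ) (0:ℝ) p) (HasFDerivAt.prodMk (hasFDerivAt_const (𝕜 := ℝ) (1:ℝ) p) (hasFDerivAt_const (𝕜 := ℝ) (0:ℝ) p))).differentiableAt

lemma diffV2 : Differentiable ℝ V2 := fun p => (HasFDerivAt.prodMk (hasFDerivAt_const (𝕜 := ℝ) (0:ℝ) p) (HasFDerivAt.prodMk (hXc p) (hasFDerivAt_const (𝕜 := ℝ) (1:ℝ) p))).differentiableAt

lemma diffV3 : Differentiable ℝ V3 := fun p => (HasFDerivAt.prodMk (hasFDerivAt_const (𝕜 := ℝ) (0:ℝ) p) (HasFDerivAt.prodMk ((hXc p).mul (hXc p)) ((hXc p).const_mul 2))).differentiableAt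

lemma diffV4 : Differentiable ℝ V4 := fun p => (HasFDerivAt.prodMk (hasFDerivAt_const (𝕜 := ℝ) (0:ℝ) p) (HasFDerivAt.prodMk (hYc p) (hZc p))).differentiableAt

lemma diffV5 : Differentiable ℝ V5 := fun p => (HasFDerivAt.prodMk (hasFDerivAt_const (𝕜 := ℝ) (-1:ℝ) p) (HasFDerivAt.prodMk (hasFDerivAt_const (𝕜 := ℝ) (0:ℝ) p) (hasFDerivAt_const (𝕜 := ℝ) (0:ℝ) p))).differentiableAt

lemma diffV6 : Differentiable ℝ V6 := fun p => (HasFDerivAt.prodMk ((hXc p).neg) (HasFDerivAt.prodMk (hasFDerivAt_const (𝕜 := ℝ) (0:ℝ) p) (hZc p))).differentiableAt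

lemma diffV7 : Differentiable ℝ V7 := fun p => (HasFDerivAt.prodMk (((hXc p).mul (hXc p)).neg) (HasFDerivAt.prodMk ((((hXc p).mul (hYc p)).const_mul 2).neg) (((hYc p).const_mul 2).neg))).differentiableAt

lemma diffV8 : Differentiable ℝ V8 := fun p => (HasFDerivAt.prodMk (((hZc p).const_mul 2).neg) (HasFDerivAt.prodMk (((hZc p).mul (hZc p)).neg) (hasFDerivAt_const (𝕜 := ℝ) (0:ℝ) p))).differentiableAt

lemma diffV9 : Differentiable ℝ V9 := fun p => (HasFDerivAt.prodMk ((((hXc p).mul (hZc p)).const_mul 2).sub ((hYc p).const_mul 2)) (HasFDerivAt.prodMk ((hXc p).mul ((hZc p).mul (hZc p))) ((hZc p).mul (hZc p)))).differentiableAt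

lemma diffV10 : Differentiable ℝ V10 := fun p => (HasFDerivAt.prodMk (((((hXc p).mul (hXc p)).mul (hZc p)).const_mul 2).sub (((hXc p).mul (hYc p)).const_mul 4)) (HasFDerivAt.prodMk ((((hXc p).mul (hXc p)).mul ((hZc p).mul (hZc p))).sub (((hYc p).mul (hYc p)).const_mul 4)) ((((hXc p).mul ((hZc p).mul (hZc p))).const_mul 2).sub (((hYc p).mul (hZc p)).const_mul 4)))).differentiableAt

lemma mV1 : V1 ∈ Submodule.span ℝ gens := Submodule.subset_span (by rw [← eX1]; simp [gens])

lemma mV2 : V2 ∈ Submodule.span ℝ gens := Submodule.subset_span (by rw [← eX2]; simp [gens])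

lemma mV3 : V3 ∈ Submodule.span ℝ gens := Submodule.subset_span (by rw [← eX3]; simp [gens])

lemma mV4 : V4 ∈ Submodule.span ℝ gens := Submodule.subset_span (by rw [← eX4]; simp [gens])

lemma mV5 : V5 ∈ Submodule.span ℝ gens := Submodule.subset_span (by rw [← eX5]; simp [gens])

lemma mV6 : V6 ∈ Submodule.span ℝ gens := Submodule.subset_span (by rw [← eX6]; simp [gens])

lemma mV7 : V7 ∈ Submodule.span ℝ gens := Submodule.subset_span (by rw [← eX7]; simp [gens])

lemma mV8 : V8 ∈ Submodule.span ℝ gens := Submodule.subset_span (by rw [← eX8]; simp [gens])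

lemma mV9 : V9 ∈ Submodule.span ℝ gens := Submodule.subset_span (by rw [← eX9]; simp [gens])

lemma mV10 : V10 ∈ Submodule.span ℝ gens := Submodule.subset_span (by rw [← eX10]; simp [gens])

lemma br_1_2 : vbracket V1 V2 = (0 : EE → EE) := by
  funext p
  simp only [vbracket, dV1, dV2]
  simp [V1, V2, V3, V4, V5, V6, V7, V8, V9, V10, Prod.ext_iff]
  all_goals try constructor
  all_goals try constructor
  all_goals ring
lemma m_1_2 : vbracket V1 V2 ∈ Submodule.span ℝ gens := by
  rw [br_1_2]; exact Submodule.zero_mem _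

lemma br_1_3 : vbracket V1 V3 = (0 : EE → EE) := by
  funext p
  simp only [vbracket, dV1, dV3]
  simp [V1, V2, V3, V4, V5, V6, V7, V8, V9, V10, Prod.ext_iff]
  all_goals try constructor
  all_goals try constructor
  all_goals ring
lemma m_1_3 : vbracket V1 V3 ∈ Submodule.span ℝ gens := by
  rw [br_1_3]; exact Submodule.zero_mem _

lemma br_1_4 : vbracket V1 V4 = (1:ℝ) • V1 := by
  funext p
  simp only [vbracket, dV1, dV4]
  simp [V1, V2, V3, V4, V5, V6, V7, V8, V9, V10, Prod.ext_iff]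
  all_goals try constructor
  all_goals try constructor
  all_goals ring
lemma m_1_4 : vbracket V1 V4 ∈ Submodule.span ℝ gens := by
  rw [br_1_4]; exact (Submodule.smul_mem _ _ mV1)

lemma br_1_5 : vbracket V1 V5 = (0 : EE → EE) := by
  funext p
  simp only [vbracket, dV1, dV5]
  simp [V1, V2, V3, V4, V5, V6, V7, V8, V9, V10, Prod.ext_iff]
  all_goals try constructor
  all_goals try constructor
  all_goals ring
lemma m_1_5 : vbracket V1 V5 ∈ Submodule.span ℝ gens := by
  rw [br_1_5]; exact Submodule.zero_mem _

lemma br_1_6 : vbracket V1 V6 = (0 : EE → EE) := by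
  funext p
  simp only [vbracket, dV1, dV6]
  simp [V1, V2, V3, V4, V5, V6, V7, V8, V9, V10, Prod.ext_iff]
  all_goals try constructor
  all_goals try constructor
  all_goals ring
lemma m_1_6 : vbracket V1 V6 ∈ Submodule.span ℝ gens := by
  rw [br_1_6]; exact Submodule.zero_mem _

lemma br_1_7 : vbracket V1 V7 = (-2:ℝ) • V2 := by
  funext p
  simp only [vbracket, dV1, dV7]
  simp [V1, V2, V3, V4, V5, V6, V7, V8, V9, V10, Prod.ext_iff]
  all_goals try constructor
  all_goals try constructor
  all_goals ring
lemma m_1_7 : vbracket V1 V7 ∈ Submodule.span ℝ gens := by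
  rw [br_1_7]; exact (Submodule.smul_mem _ _ mV2)

lemma br_1_8 : vbracket V1 V8 = (0 : EE → EE) := by
  funext p
  simp only [vbracket, dV1, dV8]
  simp [V1, V2, V3, V4, V5, V6, V7, V8, V9, V10, Prod.ext_iff]
  all_goals try constructor
  all_goals try constructor
  all_goals ring
lemma m_1_8 : vbracket V1 V8 ∈ Submodule.span ℝ gens := by
  rw [br_1_8]; exact Submodule.zero_mem _

lemma br_1_9 : vbracket V1 V9 = (2:ℝ) • V5 := by
  funext p
  simp only [vbracket, dV1, dV9]
  simp [V1, V2, V3, V4, V5, V6, V7, V8, V9, V10, Prod.ext_iff]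
  all_goals try constructor
  all_goals try constructor
  all_goals ring
lemma m_1_9 : vbracket V1 V9 ∈ Submodule.span ℝ gens := by
  rw [br_1_9]; exact (Submodule.smul_mem _ _ mV5)

lemma br_1_10 : vbracket V1 V10 = (-8:ℝ) • V4 + (4:ℝ) • V6 := by
  funext p
  simp only [vbracket, dV1, dV10]
  simp [V1, V2, V3, V4, V5, V6, V7, V8, V9, V10, Prod.ext_iff]
  all_goals try constructor
  all_goals try constructor
  all_goals ring
lemma m_1_10 : vbracket V1 V10 ∈ Submodule.span ℝ gens := by
  rw [br_1_10]; exact (Submodule.add_mem _ (Submodule.smul_mem _ _ mV4) (Submodule.smul_mem _ _ mV6))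

lemma br_2_3 : vbracket V2 V3 = (0 : EE → EE) := by
  funext p
  simp only [vbracket, dV2, dV3]
  simp [V1, V2, V3, V4, V5, V6, V7, V8, V9, V10, Prod.ext_iff]
  all_goals try constructor
  all_goals try constructor
  all_goals ring
lemma m_2_3 : vbracket V2 V3 ∈ Submodule.span ℝ gens := by
  rw [br_2_3]; exact Submodule.zero_mem _

lemma br_2_4 : vbracket V2 V4 = (1:ℝ) • V2 := by
  funext p
  simp only [vbracket, dV2, dV4]
  simp [V1, V2, V3, V4, V5, V6, V7, V8, V9, V10, Prod.ext_iff]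
  all_goals try constructor
  all_goals try constructor
  all_goals ring
lemma m_2_4 : vbracket V2 V4 ∈ Submodule.span ℝ gens := by
  rw [br_2_4]; exact (Submodule.smul_mem _ _ mV2)

lemma br_2_5 : vbracket V2 V5 = (1:ℝ) • V1 := by
  funext p
  simp only [vbracket, dV2, dV5]
  simp [V1, V2, V3, V4, V5, V6, V7, V8, V9, V10, Prod.ext_iff]
  all_goals try constructor
  all_goals try constructor
  all_goals ring
lemma m_2_5 : vbracket V2 V5 ∈ Submodule.span ℝ gens := by
  rw [br_2_5]; exact (Submodule.smul_mem _ _ mV1)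

lemma br_2_6 : vbracket V2 V6 = (1:ℝ) • V2 := by
  funext p
  simp only [vbracket, dV2, dV6]
  simp [V1, V2, V3, V4, V5, V6, V7, V8, V9, V10, Prod.ext_iff]
  all_goals try constructor
  all_goals try constructor
  all_goals ring
lemma m_2_6 : vbracket V2 V6 ∈ Submodule.span ℝ gens := by
  rw [br_2_6]; exact (Submodule.smul_mem _ _ mV2)

lemma br_2_7 : vbracket V2 V7 = (-1:ℝ) • V3 := by
  funext p
  simp only [vbracket, dV2, dV7]
  simp [V1, V2, V3, V4, V5, V6, V7, V8, V9, V10, Prod.ext_iff]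
  all_goals try constructor
  all_goals try constructor
  all_goals ring
lemma m_2_7 : vbracket V2 V7 ∈ Submodule.span ℝ gens := by
  rw [br_2_7]; exact (Submodule.smul_mem _ _ mV3)

lemma br_2_8 : vbracket V2 V8 = (2:ℝ) • V5 := by
  funext p
  simp only [vbracket, dV2, dV8]
  simp [V1, V2, V3, V4, V5, V6, V7, V8, V9, V10, Prod.ext_iff]
  all_goals try constructor
  all_goals try constructor
  all_goals ring
lemma m_2_8 : vbracket V2 V8 ∈ Submodule.span ℝ gens := by
  rw [br_2_8]; exact (Submodule.smul_mem _ _ mV5)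

lemma br_2_9 : vbracket V2 V9 = (2:ℝ) • V4 := by
  funext p
  simp only [vbracket, dV2, dV9]
  simp [V1, V2, V3, V4, V5, V6, V7, V8, V9, V10, Prod.ext_iff]
  all_goals try constructor
  all_goals try constructor
  all_goals ring
lemma m_2_9 : vbracket V2 V9 ∈ Submodule.span ℝ gens := by
  rw [br_2_9]; exact (Submodule.smul_mem _ _ mV4)

lemma br_2_10 : vbracket V2 V10 = (2:ℝ) • V7 := by
  funext p
  simp only [vbracket, dV2, dV10]
  simp [V1, V2, V3, V4, V5, V6, V7, V8, V9, V10, Prod.ext_iff]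
  all_goals try constructor
  all_goals try constructor
  all_goals ring
lemma m_2_10 : vbracket V2 V10 ∈ Submodule.span ℝ gens := by
  rw [br_2_10]; exact (Submodule.smul_mem _ _ mV7)

lemma br_3_4 : vbracket V3 V4 = (1:ℝ) • V3 := by
  funext p
  simp only [vbracket, dV3, dV4]
  simp [V1, V2, V3, V4, V5, V6, V7, V8, V9, V10, Prod.ext_iff]
  all_goals try constructor
  all_goals try constructor
  all_goals ring
lemma m_3_4 : vbracket V3 V4 ∈ Submodule.span ℝ gens := by
  rw [br_3_4]; exact (Submodule.smul_mem _ _ mV3)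

lemma br_3_5 : vbracket V3 V5 = (2:ℝ) • V2 := by
  funext p
  simp only [vbracket, dV3, dV5]
  simp [V1, V2, V3, V4, V5, V6, V7, V8, V9, V10, Prod.ext_iff]
  all_goals try constructor
  all_goals try constructor
  all_goals ring
lemma m_3_5 : vbracket V3 V5 ∈ Submodule.span ℝ gens := by
  rw [br_3_5]; exact (Submodule.smul_mem _ _ mV2)

lemma br_3_6 : vbracket V3 V6 = (2:ℝ) • V3 := by
  funext p
  simp only [vbracket, dV3, dV6]
  simp [V1, V2, V3, V4, V5, V6, V7, V8, V9, V10, Prod.ext_iff]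
  all_goals try constructor
  all_goals try constructor
  all_goals ring
lemma m_3_6 : vbracket V3 V6 ∈ Submodule.span ℝ gens := by
  rw [br_3_6]; exact (Submodule.smul_mem _ _ mV3)

lemma br_3_7 : vbracket V3 V7 = (0 : EE → EE) := by
  funext p
  simp only [vbracket, dV3, dV7]
  simp [V1, V2, V3, V4, V5, V6, V7, V8, V9, V10, Prod.ext_iff]
  all_goals try constructor
  all_goals try constructor
  all_goals ring
lemma m_3_7 : vbracket V3 V7 ∈ Submodule.span ℝ gens := by
  rw [br_3_7]; exact Submodule.zero_mem _

lemma br_3_8 : vbracket V3 V8 = (4:ℝ) • V6 := by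
  funext p
  simp only [vbracket, dV3, dV8]
  simp [V1, V2, V3, V4, V5, V6, V7, V8, V9, V10, Prod.ext_iff]
  all_goals try constructor
  all_goals try constructor
  all_goals ring
lemma m_3_8 : vbracket V3 V8 ∈ Submodule.span ℝ gens := by
  rw [br_3_8]; exact (Submodule.smul_mem _ _ mV6)

lemma br_3_9 : vbracket V3 V9 = (-2:ℝ) • V7 := by
  funext p
  simp only [vbracket, dV3, dV9]
  simp [V1, V2, V3, V4, V5, V6, V7, V8, V9, V10, Prod.ext_iff]
  all_goals try constructor
  all_goals try constructor
  all_goals ring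
lemma m_3_9 : vbracket V3 V9 ∈ Submodule.span ℝ gens := by
  rw [br_3_9]; exact (Submodule.smul_mem _ _ mV7)

lemma br_3_10 : vbracket V3 V10 = (0 : EE → EE) := by
  funext p
  simp only [vbracket, dV3, dV10]
  simp [V1, V2, V3, V4, V5, V6, V7, V8, V9, V10, Prod.ext_iff]
  all_goals try constructor
  all_goals try constructor
  all_goals ring
lemma m_3_10 : vbracket V3 V10 ∈ Submodule.span ℝ gens := by
  rw [br_3_10]; exact Submodule.zero_mem _

lemma br_4_5 : vbracket V4 V5 = (0 : EE → EE) := by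
  funext p
  simp only [vbracket, dV4, dV5]
  simp [V1, V2, V3, V4, V5, V6, V7, V8, V9, V10, Prod.ext_iff]
  all_goals try constructor
  all_goals try constructor
  all_goals ring
lemma m_4_5 : vbracket V4 V5 ∈ Submodule.span ℝ gens := by
  rw [br_4_5]; exact Submodule.zero_mem _

lemma br_4_6 : vbracket V4 V6 = (0 : EE → EE) := by
  funext p
  simp only [vbracket, dV4, dV6]
  simp [V1, V2, V3, V4, V5, V6, V7, V8, V9, V10, Prod.ext_iff]
  all_goals try constructor
  all_goals try constructor
  all_goals ring
lemma m_4_6 : vbracket V4 V6 ∈ Submodule.span ℝ gens := by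
  rw [br_4_6]; exact Submodule.zero_mem _

lemma br_4_7 : vbracket V4 V7 = (0 : EE → EE) := by
  funext p
  simp only [vbracket, dV4, dV7]
  simp [V1, V2, V3, V4, V5, V6, V7, V8, V9, V10, Prod.ext_iff]
  all_goals try constructor
  all_goals try constructor
  all_goals ring
lemma m_4_7 : vbracket V4 V7 ∈ Submodule.span ℝ gens := by
  rw [br_4_7]; exact Submodule.zero_mem _

lemma br_4_8 : vbracket V4 V8 = (1:ℝ) • V8 := by
  funext p
  simp only [vbracket, dV4, dV8]
  simp [V1, V2, V3, V4, V5, V6, V7, V8, V9, V10, Prod.ext_iff]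
  all_goals try constructor
  all_goals try constructor
  all_goals ring
lemma m_4_8 : vbracket V4 V8 ∈ Submodule.span ℝ gens := by
  rw [br_4_8]; exact (Submodule.smul_mem _ _ mV8)

lemma br_4_9 : vbracket V4 V9 = (1:ℝ) • V9 := by
  funext p
  simp only [vbracket, dV4, dV9]
  simp [V1, V2, V3, V4, V5, V6, V7, V8, V9, V10, Prod.ext_iff]
  all_goals try constructor
  all_goals try constructor
  all_goals ring
lemma m_4_9 : vbracket V4 V9 ∈ Submodule.span ℝ gens := by
  rw [br_4_9]; exact (Submodule.smul_mem _ _ mV9)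

lemma br_4_10 : vbracket V4 V10 = (1:ℝ) • V10 := by
  funext p
  simp only [vbracket, dV4, dV10]
  simp [V1, V2, V3, V4, V5, V6, V7, V8, V9, V10, Prod.ext_iff]
  all_goals try constructor
  all_goals try constructor
  all_goals ring
lemma m_4_10 : vbracket V4 V10 ∈ Submodule.span ℝ gens := by
  rw [br_4_10]; exact (Submodule.smul_mem _ _ mV10)

lemma br_5_6 : vbracket V5 V6 = (-1:ℝ) • V5 := by
  funext p
  simp only [vbracket, dV5, dV6]
  simp [V1, V2, V3, V4, V5, V6, V7, V8, V9, V10, Prod.ext_iff]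
  all_goals try constructor
  all_goals try constructor
  all_goals ring
lemma m_5_6 : vbracket V5 V6 ∈ Submodule.span ℝ gens := by
  rw [br_5_6]; exact (Submodule.smul_mem _ _ mV5)

lemma br_5_7 : vbracket V5 V7 = (2:ℝ) • V4 + (-2:ℝ) • V6 := by
  funext p
  simp only [vbracket, dV5, dV7]
  simp [V1, V2, V3, V4, V5, V6, V7, V8, V9, V10, Prod.ext_iff]
  all_goals try constructor
  all_goals try constructor
  all_goals ring
lemma m_5_7 : vbracket V5 V7 ∈ Submodule.span ℝ gens := by
  rw [br_5_7]; exact (Submodule.add_mem _ (Submodule.smul_mem _ _ mV4) (Submodule.smul_mem _ _ mV6))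

lemma br_5_8 : vbracket V5 V8 = (0 : EE → EE) := by
  funext p
  simp only [vbracket, dV5, dV8]
  simp [V1, V2, V3, V4, V5, V6, V7, V8, V9, V10, Prod.ext_iff]
  all_goals try constructor
  all_goals try constructor
  all_goals ring
lemma m_5_8 : vbracket V5 V8 ∈ Submodule.span ℝ gens := by
  rw [br_5_8]; exact Submodule.zero_mem _

lemma br_5_9 : vbracket V5 V9 = (1:ℝ) • V8 := by
  funext p
  simp only [vbracket, dV5, dV9]
  simp [V1, V2, V3, V4, V5, V6, V7, V8, V9, V10, Prod.ext_iff]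
  all_goals try constructor
  all_goals try constructor
  all_goals ring
lemma m_5_9 : vbracket V5 V9 ∈ Submodule.span ℝ gens := by
  rw [br_5_9]; exact (Submodule.smul_mem _ _ mV8)

lemma br_5_10 : vbracket V5 V10 = (-2:ℝ) • V9 := by
  funext p
  simp only [vbracket, dV5, dV10]
  simp [V1, V2, V3, V4, V5, V6, V7, V8, V9, V10, Prod.ext_iff]
  all_goals try constructor
  all_goals try constructor
  all_goals ring
lemma m_5_10 : vbracket V5 V10 ∈ Submodule.span ℝ gens := by
  rw [br_5_10]; exact (Submodule.smul_mem _ _ mV9)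

lemma br_6_7 : vbracket V6 V7 = (-1:ℝ) • V7 := by
  funext p
  simp only [vbracket, dV6, dV7]
  simp [V1, V2, V3, V4, V5, V6, V7, V8, V9, V10, Prod.ext_iff]
  all_goals try constructor
  all_goals try constructor
  all_goals ring
lemma m_6_7 : vbracket V6 V7 ∈ Submodule.span ℝ gens := by
  rw [br_6_7]; exact (Submodule.smul_mem _ _ mV7)

lemma br_6_8 : vbracket V6 V8 = (2:ℝ) • V8 := by
  funext p
  simp only [vbracket, dV6, dV8]
  simp [V1, V2, V3, V4, V5, V6, V7, V8, V9, V10, Prod.ext_iff]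
  all_goals try constructor
  all_goals try constructor
  all_goals ring
lemma m_6_8 : vbracket V6 V8 ∈ Submodule.span ℝ gens := by
  rw [br_6_8]; exact (Submodule.smul_mem _ _ mV8)

lemma br_6_9 : vbracket V6 V9 = (1:ℝ) • V9 := by
  funext p
  simp only [vbracket, dV6, dV9]
  simp [V1, V2, V3, V4, V5, V6, V7, V8, V9, V10, Prod.ext_iff]
  all_goals try constructor
  all_goals try constructor
  all_goals ring
lemma m_6_9 : vbracket V6 V9 ∈ Submodule.span ℝ gens := by
  rw [br_6_9]; exact (Submodule.smul_mem _ _ mV9)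

lemma br_6_10 : vbracket V6 V10 = (0 : EE → EE) := by
  funext p
  simp only [vbracket, dV6, dV10]
  simp [V1, V2, V3, V4, V5, V6, V7, V8, V9, V10, Prod.ext_iff]
  all_goals try constructor
  all_goals try constructor
  all_goals ring
lemma m_6_10 : vbracket V6 V10 ∈ Submodule.span ℝ gens := by
  rw [br_6_10]; exact Submodule.zero_mem _

lemma br_7_8 : vbracket V7 V8 = (-2:ℝ) • V9 := by
  funext p
  simp only [vbracket, dV7, dV8]
  simp [V1, V2, V3, V4, V5, V6, V7, V8, V9, V10, Prod.ext_iff]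
  all_goals try constructor
  all_goals try constructor
  all_goals ring
lemma m_7_8 : vbracket V7 V8 ∈ Submodule.span ℝ gens := by
  rw [br_7_8]; exact (Submodule.smul_mem _ _ mV9)

lemma br_7_9 : vbracket V7 V9 = (1:ℝ) • V10 := by
  funext p
  simp only [vbracket, dV7, dV9]
  simp [V1, V2, V3, V4, V5, V6, V7, V8, V9, V10, Prod.ext_iff]
  all_goals try constructor
  all_goals try constructor
  all_goals ring
lemma m_7_9 : vbracket V7 V9 ∈ Submodule.span ℝ gens := by
  rw [br_7_9]; exact (Submodule.smul_mem _ _ mV10)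

lemma br_7_10 : vbracket V7 V10 = (0 : EE → EE) := by
  funext p
  simp only [vbracket, dV7, dV10]
  simp [V1, V2, V3, V4, V5, V6, V7, V8, V9, V10, Prod.ext_iff]
  all_goals try constructor
  all_goals try constructor
  all_goals ring
lemma m_7_10 : vbracket V7 V10 ∈ Submodule.span ℝ gens := by
  rw [br_7_10]; exact Submodule.zero_mem _

lemma br_8_9 : vbracket V8 V9 = (0 : EE → EE) := by
  funext p
  simp only [vbracket, dV8, dV9]
  simp [V1, V2, V3, V4, V5, V6, V7, V8, V9, V10, Prod.ext_iff]
  all_goals try constructor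
  all_goals try constructor
  all_goals ring
lemma m_8_9 : vbracket V8 V9 ∈ Submodule.span ℝ gens := by
  rw [br_8_9]; exact Submodule.zero_mem _

lemma br_8_10 : vbracket V8 V10 = (0 : EE → EE) := by
  funext p
  simp only [vbracket, dV8, dV10]
  simp [V1, V2, V3, V4, V5, V6, V7, V8, V9, V10, Prod.ext_iff]
  all_goals try constructor
  all_goals try constructor
  all_goals ring
lemma m_8_10 : vbracket V8 V10 ∈ Submodule.span ℝ gens := by
  rw [br_8_10]; exact Submodule.zero_mem _

lemma br_9_10 : vbracket V9 V10 = (0 : EE → EE) := by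
  funext p
  simp only [vbracket, dV9, dV10]
  simp [V1, V2, V3, V4, V5, V6, V7, V8, V9, V10, Prod.ext_iff]
  all_goals try constructor
  all_goals try constructor
  all_goals ring
lemma m_9_10 : vbracket V9 V10 ∈ Submodule.span ℝ gens := by
  rw [br_9_10]; exact Submodule.zero_mem _


lemma vb_self (Xf : EE → EE) : vbracket Xf Xf = 0 := by
  funext p; simp [vbracket]

lemma vb_skew (Xf Yf : EE → EE) : vbracket Xf Yf = -vbracket Yf Xf := by
  funext p; simp only [Pi.neg_apply, vbracket, neg_sub]

lemma gens_cases {G : (ℝ × ℝ × ℝ) → ℝ × ℝ × ℝ} (h : G ∈ gens) :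
    G = V1 ∨ G = V2 ∨ G = V3 ∨ G = V4 ∨ G = V5 ∨ G = V6 ∨ G = V7 ∨ G = V8 ∨ G = V9 ∨ G = V10 := by
  simp only [gens, Set.mem_insert_iff, Set.mem_singleton_iff] at h
  rwa [eX1, eX2, eX3, eX4, eX5, eX6, eX7, eX8, eX9, eX10] at h

lemma gens_diff : ∀ G ∈ gens, Differentiable ℝ G := by
  intro G hG
  rcases gens_cases hG with rfl|rfl|rfl|rfl|rfl|rfl|rfl|rfl|rfl|rfl
  exacts [diffV1, diffV2, diffV3, diffV4, diffV5, diffV6, diffV7, diffV8, diffV9, diffV10]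

lemma span_diff : ∀ Xf ∈ Submodule.span ℝ gens, Differentiable ℝ Xf := by
  intro Xf hX
  induction hX using Submodule.span_induction with
  | mem g h => exact gens_diff g h
  | zero => exact differentiable_const 0
  | add a b _ _ ha hb => exact ha.add hb
  | smul c a _ ha => exact ha.const_smul c

lemma vb_zero_left (Yf : EE → EE) : vbracket 0 Yf = 0 := by
  funext p
  simp only [vbracket, Pi.zero_apply, map_zero]
  rw [show ((0 : EE → EE)) = (fun _ => (0 : EE)) from rfl, fderiv_const_apply]
  simp

lemma vb_zero_right (Xf : EE → EE) : vbracket Xf 0 = 0 := by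
  funext p
  simp only [vbracket, Pi.zero_apply, map_zero]
  rw [show ((0 : EE → EE)) = (fun _ => (0 : EE)) from rfl, fderiv_const_apply]
  simp

lemma vb_add_left {Xf Xg Yf : EE → EE} (hX : Differentiable ℝ Xf) (hX' : Differentiable ℝ Xg) :
    vbracket (Xf + Xg) Yf = vbracket Xf Yf + vbracket Xg Yf := by
  funext p
  simp only [vbracket, Pi.add_apply, map_add, fderiv_add (hX p) (hX' p),
    ContinuousLinearMap.add_apply]
  abel

lemma vb_smul_left {Xf Yf : EE → EE} (c : ℝ) (hX : Differentiable ℝ Xf) :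
    vbracket (c • Xf) Yf = c • vbracket Xf Yf := by
  funext p
  simp only [vbracket, Pi.smul_apply, map_smul, fderiv_const_smul (hX p) c,
    ContinuousLinearMap.smul_apply, smul_sub]

lemma vb_add_right {Xf Yf Yg : EE → EE} (hY : Differentiable ℝ Yf) (hY' : Differentiable ℝ Yg) :
    vbracket Xf (Yf + Yg) = vbracket Xf Yf + vbracket Xf Yg := by
  funext p
  simp only [vbracket, Pi.add_apply, map_add, fderiv_add (hY p) (hY' p),
    ContinuousLinearMap.add_apply]
  abel

lemma vb_smul_right {Xf Yf : EE → EE} (c : ℝ) (hY : Differentiable ℝ Yf) :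
    vbracket Xf (c • Yf) = c • vbracket Xf Yf := by
  funext p
  simp only [vbracket, Pi.smul_apply, map_smul, fderiv_const_smul (hY p) c,
    ContinuousLinearMap.smul_apply, smul_sub]

def vvv : Fin 10 → ((ℝ × ℝ × ℝ) → ℝ × ℝ × ℝ) := ![V1, V2, V3, V4, V5, V6, V7, V8, V9, V10]

lemma gens_eq_lit : gens = {V1, V2, V3, V4, V5, V6, V7, V8, V9, V10} := by
  simp only [gens]
  rw [eX1, eX2, eX3, eX4, eX5, eX6, eX7, eX8, eX9, eX10]

lemma fs1_0 : Fin.succ (0 : Fin 1) = (1 : Fin 2) := rfl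
lemma fs2_0 : Fin.succ (0 : Fin 2) = (1 : Fin 3) := rfl
lemma fs2_1 : Fin.succ (1 : Fin 2) = (2 : Fin 3) := rfl
lemma fs3_0 : Fin.succ (0 : Fin 3) = (1 : Fin 4) := rfl
lemma fs3_1 : Fin.succ (1 : Fin 3) = (2 : Fin 4) := rfl
lemma fs3_2 : Fin.succ (2 : Fin 3) = (3 : Fin 4) := rfl
lemma fs4_0 : Fin.succ (0 : Fin 4) = (1 : Fin 5) := rfl
lemma fs4_1 : Fin.succ (1 : Fin 4) = (2 : Fin 5) := rfl
lemma fs4_2 : Fin.succ (2 : Fin 4) = (3 : Fin 5) := rfl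
lemma fs4_3 : Fin.succ (3 : Fin 4) = (4 : Fin 5) := rfl
lemma fs5_0 : Fin.succ (0 : Fin 5) = (1 : Fin 6) := rfl
lemma fs5_1 : Fin.succ (1 : Fin 5) = (2 : Fin 6) := rfl
lemma fs5_2 : Fin.succ (2 : Fin 5) = (3 : Fin 6) := rfl
lemma fs5_3 : Fin.succ (3 : Fin 5) = (4 : Fin 6) := rfl
lemma fs5_4 : Fin.succ (4 : Fin 5) = (5 : Fin 6) := rfl
lemma fs6_0 : Fin.succ (0 : Fin 6) = (1 : Fin 7) := rfl
lemma fs6_1 : Fin.succ (1 : Fin 6) = (2 : Fin 7) := rfl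
lemma fs6_2 : Fin.succ (2 : Fin 6) = (3 : Fin 7) := rfl
lemma fs6_3 : Fin.succ (3 : Fin 6) = (4 : Fin 7) := rfl
lemma fs6_4 : Fin.succ (4 : Fin 6) = (5 : Fin 7) := rfl
lemma fs6_5 : Fin.succ (5 : Fin 6) = (6 : Fin 7) := rfl
lemma fs7_0 : Fin.succ (0 : Fin 7) = (1 : Fin 8) := rfl
lemma fs7_1 : Fin.succ (1 : Fin 7) = (2 : Fin 8) := rfl
lemma fs7_2 : Fin.succ (2 : Fin 7) = (3 : Fin 8) := rfl
lemma fs7_3 : Fin.succ (3 : Fin 7) = (4 : Fin 8) := rfl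
lemma fs7_4 : Fin.succ (4 : Fin 7) = (5 : Fin 8) := rfl
lemma fs7_5 : Fin.succ (5 : Fin 7) = (6 : Fin 8) := rfl
lemma fs7_6 : Fin.succ (6 : Fin 7) = (7 : Fin 8) := rfl
lemma fs8_0 : Fin.succ (0 : Fin 8) = (1 : Fin 9) := rfl
lemma fs8_1 : Fin.succ (1 : Fin 8) = (2 : Fin 9) := rfl
lemma fs8_2 : Fin.succ (2 : Fin 8) = (3 : Fin 9) := rfl
lemma fs8_3 : Fin.succ (3 : Fin 8) = (4 : Fin 9) := rfl
lemma fs8_4 : Fin.succ (4 : Fin 8) = (5 : Fin 9) := rfl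
lemma fs8_5 : Fin.succ (5 : Fin 8) = (6 : Fin 9) := rfl
lemma fs8_6 : Fin.succ (6 : Fin 8) = (7 : Fin 9) := rfl
lemma fs8_7 : Fin.succ (7 : Fin 8) = (8 : Fin 9) := rfl
lemma fs9_0 : Fin.succ (0 : Fin 9) = (1 : Fin 10) := rfl
lemma fs9_1 : Fin.succ (1 : Fin 9) = (2 : Fin 10) := rfl
lemma fs9_2 : Fin.succ (2 : Fin 9) = (3 : Fin 10) := rfl
lemma fs9_3 : Fin.succ (3 : Fin 9) = (4 : Fin 10) := rfl
lemma fs9_4 : Fin.succ (4 : Fin 9) = (5 : Fin 10) := rfl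
lemma fs9_5 : Fin.succ (5 : Fin 9) = (6 : Fin 10) := rfl
lemma fs9_6 : Fin.succ (6 : Fin 9) = (7 : Fin 10) := rfl
lemma fs9_7 : Fin.succ (7 : Fin 9) = (8 : Fin 10) := rfl
lemma fs9_8 : Fin.succ (8 : Fin 9) = (9 : Fin 10) := rfl

lemma range_vvv : Set.range vvv = gens := by
  rw [gens_eq_lit]
  ext f
  simp only [Set.mem_range, Set.mem_insert_iff, Set.mem_singleton_iff, vvv]
  constructor
  · rintro ⟨i, rfl⟩
    fin_cases i
    exacts [Or.inl rfl, Or.inr (Or.inl rfl), Or.inr (Or.inr (Or.inl rfl)),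
      Or.inr (Or.inr (Or.inr (Or.inl rfl))),
      Or.inr (Or.inr (Or.inr (Or.inr (Or.inl rfl)))),
      Or.inr (Or.inr (Or.inr (Or.inr (Or.inr (Or.inl rfl))))),
      Or.inr (Or.inr (Or.inr (Or.inr (Or.inr (Or.inr (Or.inl rfl)))))),
      Or.inr (Or.inr (Or.inr (Or.inr (Or.inr (Or.inr (Or.inr (Or.inl rfl))))))),
      Or.inr (Or.inr (Or.inr (Or.inr (Or.inr (Or.inr (Or.inr (Or.inr (Or.inl rfl)))))))),
      Or.inr (Or.inr (Or.inr (Or.inr (Or.inr (Or.inr (Or.inr (Or.inr (Or.inr rfl))))))))]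
  · rintro (rfl|rfl|rfl|rfl|rfl|rfl|rfl|rfl|rfl|rfl)
    exacts [⟨0, rfl⟩, ⟨1, rfl⟩, ⟨2, rfl⟩, ⟨3, rfl⟩, ⟨4, rfl⟩, ⟨5, rfl⟩, ⟨6, rfl⟩, ⟨7, rfl⟩, ⟨8, rfl⟩, ⟨9, rfl⟩]

lemma li_vvv : LinearIndependent ℝ vvv := by
  rw [Fintype.linearIndependent_iff]
  intro g hg i
  have e1 := congrArg (fun q : ℝ × ℝ × ℝ => q.1) (congrFun hg ((0:ℝ),(0:ℝ),(0:ℝ)))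
  have e2 := congrArg (fun q : ℝ × ℝ × ℝ => q.2.1) (congrFun hg ((0:ℝ),(0:ℝ),(0:ℝ)))
  have e3 := congrArg (fun q : ℝ × ℝ × ℝ => q.2.2) (congrFun hg ((0:ℝ),(0:ℝ),(0:ℝ)))
  have e4 := congrArg (fun q : ℝ × ℝ × ℝ => q.1) (congrFun hg ((1:ℝ),(0:ℝ),(0:ℝ)))
  have e5 := congrArg (fun q : ℝ × ℝ × ℝ => q.2.1) (congrFun hg ((1:ℝ),(0:ℝ),(0:ℝ)))
  have e6 := congrArg (fun q : ℝ × ℝ × ℝ => q.2.2) (congrFun hg ((1:ℝ),(0:ℝ),(0:ℝ)))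
  have e7 := congrArg (fun q : ℝ × ℝ × ℝ => q.1) (congrFun hg ((0:ℝ),(1:ℝ),(0:ℝ)))
  have e8 := congrArg (fun q : ℝ × ℝ × ℝ => q.2.1) (congrFun hg ((0:ℝ),(1:ℝ),(0:ℝ)))
  have e9 := congrArg (fun q : ℝ × ℝ × ℝ => q.2.2) (congrFun hg ((0:ℝ),(1:ℝ),(0:ℝ)))
  have e10 := congrArg (fun q : ℝ × ℝ × ℝ => q.1) (congrFun hg ((0:ℝ),(0:ℝ),(1:ℝ)))
  have e11 := congrArg (fun q : ℝ × ℝ × ℝ => q.2.1) (congrFun hg ((0:ℝ),(0:ℝ),(1:ℝ)))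
  have e12 := congrArg (fun q : ℝ × ℝ × ℝ => q.2.2) (congrFun hg ((0:ℝ),(0:ℝ),(1:ℝ)))
  simp [vvv, V1, V2, V3, V4, V5, V6, V7, V8, V9, V10, Fin.sum_univ_succ,
    fs1_0, fs2_0, fs2_1, fs3_0, fs3_1, fs3_2, fs4_0, fs4_1, fs4_2, fs4_3, fs5_0, fs5_1, fs5_2, fs5_3, fs5_4, fs6_0, fs6_1, fs6_2, fs6_3, fs6_4, fs6_5, fs7_0, fs7_1, fs7_2, fs7_3, fs7_4, fs7_5, fs7_6, fs8_0, fs8_1, fs8_2, fs8_3, fs8_4, fs8_5, fs8_6, fs8_7, fs9_0, fs9_1, fs9_2, fs9_3, fs9_4, fs9_5, fs9_6, fs9_7, fs9_8]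
    at e1 e2 e3 e4 e5 e6 e7 e8 e9 e10 e11 e12
  have h0 : g 0 = 0 := by linarith
  have h1 : g 1 = 0 := by linarith
  have h2 : g 2 = 0 := by linarith
  have h3 : g 3 = 0 := by linarith
  have h4 : g 4 = 0 := by linarith
  have h5 : g 5 = 0 := by linarith
  have h6 : g 6 = 0 := by linarith
  have h7 : g 7 = 0 := by linarith
  have h8 : g 8 = 0 := by linarith
  have h9 : g 9 = 0 := by linarith
  fin_cases i
  exacts [h0, h1, h2, h3, h4, h5, h6, h7, h8, h9]

theorem stmt13 :
    (∀ X ∈ Submodule.span ℝ gens, ∀ Y ∈ Submodule.span ℝ gens,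
        vbracket X Y ∈ Submodule.span ℝ gens) ∧
      Module.finrank ℝ (Submodule.span ℝ gens) = 10 := by
  constructor
  · have key : ∀ Y ∈ Submodule.span ℝ gens, ∀ G ∈ gens,
        vbracket G Y ∈ Submodule.span ℝ gens := by
      intro Y hY
      induction hY using Submodule.span_induction with
      | mem Y0 h0 =>
        intro G hG
        rcases gens_cases hG with rfl|rfl|rfl|rfl|rfl|rfl|rfl|rfl|rfl|rfl <;>
          rcases gens_cases h0 with rfl|rfl|rfl|rfl|rfl|rfl|rfl|rfl|rfl|rfl
        · rw [vb_self]; exact Submodule.zero_mem _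
        · exact m_1_2
        · exact m_1_3
        · exact m_1_4
        · exact m_1_5
        · exact m_1_6
        · exact m_1_7
        · exact m_1_8
        · exact m_1_9
        · exact m_1_10
        · rw [vb_skew]; exact Submodule.neg_mem _ m_1_2
        · rw [vb_self]; exact Submodule.zero_mem _
        · exact m_2_3
        · exact m_2_4
        · exact m_2_5
        · exact m_2_6
        · exact m_2_7
        · exact m_2_8
        · exact m_2_9
        · exact m_2_10
        · rw [vb_skew]; exact Submodule.neg_mem _ m_1_3
        · rw [vb_skew]; exact Submodule.neg_mem _ m_2_3
        · rw [vb_self]; exact Submodule.zero_mem _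
        · exact m_3_4
        · exact m_3_5
        · exact m_3_6
        · exact m_3_7
        · exact m_3_8
        · exact m_3_9
        · exact m_3_10
        · rw [vb_skew]; exact Submodule.neg_mem _ m_1_4
        · rw [vb_skew]; exact Submodule.neg_mem _ m_2_4
        · rw [vb_skew]; exact Submodule.neg_mem _ m_3_4
        · rw [vb_self]; exact Submodule.zero_mem _
        · exact m_4_5
        · exact m_4_6
        · exact m_4_7
        · exact m_4_8
        · exact m_4_9
        · exact m_4_10
        · rw [vb_skew]; exact Submodule.neg_mem _ m_1_5
        · rw [vb_skew]; exact Submodule.neg_mem _ m_2_5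
        · rw [vb_skew]; exact Submodule.neg_mem _ m_3_5
        · rw [vb_skew]; exact Submodule.neg_mem _ m_4_5
        · rw [vb_self]; exact Submodule.zero_mem _
        · exact m_5_6
        · exact m_5_7
        · exact m_5_8
        · exact m_5_9
        · exact m_5_10
        · rw [vb_skew]; exact Submodule.neg_mem _ m_1_6
        · rw [vb_skew]; exact Submodule.neg_mem _ m_2_6
        · rw [vb_skew]; exact Submodule.neg_mem _ m_3_6
        · rw [vb_skew]; exact Submodule.neg_mem _ m_4_6
        · rw [vb_skew]; exact Submodule.neg_mem _ m_5_6
        · rw [vb_self]; exact Submodule.zero_mem _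
        · exact m_6_7
        · exact m_6_8
        · exact m_6_9
        · exact m_6_10
        · rw [vb_skew]; exact Submodule.neg_mem _ m_1_7
        · rw [vb_skew]; exact Submodule.neg_mem _ m_2_7
        · rw [vb_skew]; exact Submodule.neg_mem _ m_3_7
        · rw [vb_skew]; exact Submodule.neg_mem _ m_4_7
        · rw [vb_skew]; exact Submodule.neg_mem _ m_5_7
        · rw [vb_skew]; exact Submodule.neg_mem _ m_6_7
        · rw [vb_self]; exact Submodule.zero_mem _
        · exact m_7_8
        · exact m_7_9
        · exact m_7_10
        · rw [vb_skew]; exact Submodule.neg_mem _ m_1_8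
        · rw [vb_skew]; exact Submodule.neg_mem _ m_2_8
        · rw [vb_skew]; exact Submodule.neg_mem _ m_3_8
        · rw [vb_skew]; exact Submodule.neg_mem _ m_4_8
        · rw [vb_skew]; exact Submodule.neg_mem _ m_5_8
        · rw [vb_skew]; exact Submodule.neg_mem _ m_6_8
        · rw [vb_skew]; exact Submodule.neg_mem _ m_7_8
        · rw [vb_self]; exact Submodule.zero_mem _
        · exact m_8_9
        · exact m_8_10
        · rw [vb_skew]; exact Submodule.neg_mem _ m_1_9
        · rw [vb_skew]; exact Submodule.neg_mem _ m_2_9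
        · rw [vb_skew]; exact Submodule.neg_mem _ m_3_9
        · rw [vb_skew]; exact Submodule.neg_mem _ m_4_9
        · rw [vb_skew]; exact Submodule.neg_mem _ m_5_9
        · rw [vb_skew]; exact Submodule.neg_mem _ m_6_9
        · rw [vb_skew]; exact Submodule.neg_mem _ m_7_9
        · rw [vb_skew]; exact Submodule.neg_mem _ m_8_9
        · rw [vb_self]; exact Submodule.zero_mem _
        · exact m_9_10
        · rw [vb_skew]; exact Submodule.neg_mem _ m_1_10
        · rw [vb_skew]; exact Submodule.neg_mem _ m_2_10
        · rw [vb_skew]; exact Submodule.neg_mem _ m_3_10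
        · rw [vb_skew]; exact Submodule.neg_mem _ m_4_10
        · rw [vb_skew]; exact Submodule.neg_mem _ m_5_10
        · rw [vb_skew]; exact Submodule.neg_mem _ m_6_10
        · rw [vb_skew]; exact Submodule.neg_mem _ m_7_10
        · rw [vb_skew]; exact Submodule.neg_mem _ m_8_10
        · rw [vb_skew]; exact Submodule.neg_mem _ m_9_10
        · rw [vb_self]; exact Submodule.zero_mem _
      | zero =>
        intro G hG
        rw [vb_zero_right]; exact Submodule.zero_mem _
      | add a b ha hb iha ihb =>
        intro G hG
        rw [vb_add_right (span_diff _ ha) (span_diff _ hb)]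
        exact Submodule.add_mem _ (iha G hG) (ihb G hG)
      | smul c a ha iha =>
        intro G hG
        rw [vb_smul_right c (span_diff _ ha)]
        exact Submodule.smul_mem _ _ (iha G hG)
    intro X hX Y hY
    induction hX using Submodule.span_induction with
    | mem G hG => exact key Y hY G hG
    | zero => rw [vb_zero_left]; exact Submodule.zero_mem _
    | add a b ha hb iha ihb =>
      rw [vb_add_left (span_diff _ ha) (span_diff _ hb)]
      exact Submodule.add_mem _ iha ihb
    | smul c a ha iha =>
      rw [vb_smul_left c (span_diff _ ha)]
      exact Submodule.smul_mem _ _ iha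
  · rw [← range_vvv, finrank_span_eq_card li_vvv]
    simp
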